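/- For natural numbers e ≥ f ≥ 1, the identity C(e-1, f-1)² − C(e, f)·C(e-2, f-2) = N_{e-1,f-1} holds, where N_{e,f} = (1/e) C(e, f+1) C(e, f) is the Narayana number. -/

import Mathlib

/-- Binomial coefficient for integer arguments, with the convention
`C(n,k) = 0` whenever `k < 0` or `k > n`. -/
def Cz (n k : ℤ) : ℤ :=
  if 0 ≤ k ∧ k ≤ n then (n.toNat.choose k.toNat : ℤ) else 0

/-- The Narayana number `N_{e,f} = (1/e) C(e,f+1) C(e,f)` (for `e ≥ 1`;
`N_{0,0} = 1` and `N_{0,f} = 0` for `f ≥ 1`). -/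
def Nar (e f : ℕ) : ℚ :=
  if e = 0 then (if f = 0 then 1 else 0)
  else (1 / (e : ℚ)) * (e.choose (f + 1) : ℚ) * (e.choose f : ℚ)

/-
With `c = C(m+1,j+1)`, the absorption identities give `C(m+2,j+2) = (m+2)/(j+2) · c`,
`C(m,j) = (j+1)/(m+1) · c` and `C(m+1,j+2) = (m-j)/(j+2) · c`, so both
`(m+1) (c² - C(m+2,j+2) C(m,j))` and `C(m+1,j+2) · c` equal `(m-j)/(j+2) · c²`.
The cases `f = 1`, where `C(e-2,-1) = 0`, are immediate.
-/

theorem Cz_natCast (n k : ℕ) : Cz n k = n.choose k := by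
  unfold Cz
  split_ifs with h
  · simp
  · rw [Nat.choose_eq_zero_of_lt (by omega), Nat.cast_zero]

theorem Cz_of_neg (n : ℤ) {k : ℤ} (hk : k < 0) : Cz n k = 0 :=
  if_neg fun h => absurd h.1 (not_le.2 hk)

theorem Nar_succ (n f : ℕ) :
    Nar (n + 1) f = ((n + 1).choose (f + 1) * (n + 1).choose f : ℚ) / (n + 1) := by
  rw [Nar, if_neg n.succ_ne_zero]
  push_cast
  ring

theorem Nar_succ_zero (n : ℕ) : Nar (n + 1) 0 = 1 := by
  rw [Nar_succ]
  field_simp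
  simp

theorem Nat.add_one_mul_choose_sq (m j : ℕ) :
    (m + 1) * (m + 1).choose (j + 1) ^ 2 =
      (m + 1) * ((m + 2).choose (j + 2) * m.choose j) +
        (m + 1).choose (j + 2) * (m + 1).choose (j + 1) := by
  have hc := Nat.choose_succ_succ' m j
  have hD : (m + 2).choose (j + 2) = (m + 1).choose (j + 1) + (m + 1).choose (j + 2) :=
    Nat.choose_succ_succ' (m + 1) (j + 1)
  have ha := Nat.add_one_mul_choose_eq m j
  have hb : (m + 1) * m.choose (j + 1) = (m + 1).choose (j + 2) * (j + 2) :=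
    Nat.add_one_mul_choose_eq m (j + 1)
  zify at hc hD ha hb ⊢
  linear_combination ((m + 1) * (m + 1).choose (j + 1) : ℤ) * hc
    + ((m + 1).choose (j + 1) : ℤ) * hb - ((m + 1).choose (j + 2) : ℤ) * ha
    - ((m + 1) * m.choose j : ℤ) * hD

theorem Nar_succ_succ (m j : ℕ) :
    Nar (m + 1) (j + 1) =
      ((m + 1).choose (j + 1) : ℚ) ^ 2 - (m + 2).choose (j + 2) * m.choose j := by
  have key := congrArg (Nat.cast (R := ℚ)) (Nat.add_one_mul_choose_sq m j)
  push_cast at key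
  rw [Nar_succ]
  field_simp
  linear_combination -key

/-- For `e ≥ f ≥ 1`, `C(e-1,f-1)² − C(e,f)·C(e-2,f-2) = N_{e-1,f-1}`. -/
theorem narayana_identity (e f : ℕ) (hf : 1 ≤ f) (hfe : f ≤ e) :
    (((e - 1).choose (f - 1) : ℚ)) ^ 2 -
      ((e.choose f : ℚ)) * (Cz ((e : ℤ) - 2) ((f : ℤ) - 2) : ℚ) =
      Nar (e - 1) (f - 1) := by
  obtain ⟨k, rfl⟩ : ∃ k, f = k + 1 := ⟨f - 1, by omega⟩
  obtain ⟨n, rfl⟩ : ∃ n, e = n + 1 := ⟨e - 1, by omega⟩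
  simp only [Nat.add_sub_cancel]
  rcases k with _ | j
  · rw [Cz_of_neg _ (by omega)]
    rcases n with _ | m
    · simp [Nar]
    · simp [Nar_succ_zero]
  · obtain ⟨m, rfl⟩ : ∃ m, n = m + 1 := ⟨n - 1, by omega⟩
    have hCz : Cz ((m + 1 + 1 : ℕ) - 2) ((j + 1 + 1 : ℕ) - 2) = m.choose j := by
      rw [← Cz_natCast]
      push_cast
      ring_nf
    rw [hCz, Nar_succ_succ]
    push_cast
    ring
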